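/- arXiv:2409.00813 — 6 statements merged into one kernel-verified Lean document; each statement's English description precedes it below -/
import Mathlib

section
/- For every natural number n, the n-th derivative of the function h(z) = 1/(e^{-z} - 1) satisfies h^{(n)}(z) = e^z A_n(e^z) / (1 - e^z)^{n+1} for all z with e^z ≠ 1, where A_n is the n-th Eulerian polynomial. -/
open Complex Polynomial Filter

/-- The Eulerian polynomials, defined by the recurrence
`A 0 = 1`, `A (n+1) = (1 + n*X) * A n + X*(1-X) * (A n)'`. -/
noncomputable def eulerianPoly : ℕ → Polynomial ℤ
  | 0 => 1
  | n + 1 => (1 + Polynomial.C (n : ℤ) * Polynomial.X) * eulerianPoly n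
      + Polynomial.X * (1 - Polynomial.X) * Polynomial.derivative (eulerianPoly n)

/-- The Eulerian numbers `E(n,k)`, coefficients of the Eulerian polynomials. -/
noncomputable def eulerianNum (n k : ℕ) : ℤ := (eulerianPoly n).coeff k

/-!
With `t = e^z` we have `d/dz = t d/dt`, and `1 / (e^{-z} - 1) = t / (1 - t)`. Applying `t d/dt`
to `t A_n(t) / (1 - t)^(n+1)` gives, by the quotient rule,
`t ((1 + n t) A_n(t) + t (1 - t) A_n'(t)) / (1 - t)^(n+2)`, and the numerator is exactly the
recurrence defining `A_(n+1)`.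
-/

theorem aeval_eulerianPoly_succ {R : Type*} [CommRing R] (n : ℕ) (t : R) :
    aeval t (eulerianPoly (n + 1)) =
      (1 + n * t) * aeval t (eulerianPoly n) +
        t * (1 - t) * aeval t (derivative (eulerianPoly n)) := by
  simp [eulerianPoly]

noncomputable def eulerianFrac {𝕜 : Type*} [Field 𝕜] (n : ℕ) (t : 𝕜) : 𝕜 :=
  t * aeval t (eulerianPoly n) / (1 - t) ^ (n + 1)

theorem HasDerivAt.eulerianFrac_comp {𝕜 : Type*} [NontriviallyNormedField 𝕜]
    {u : 𝕜 → 𝕜} {z : 𝕜} (hu : HasDerivAt u (u z) z) (hz : u z ≠ 1) (n : ℕ) :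
    HasDerivAt (fun w => eulerianFrac n (u w)) (eulerianFrac (n + 1) (u z)) z := by
  have hnum := hu.fun_mul ((Polynomial.hasDerivAt_aeval (eulerianPoly n) (u z)).comp z hu)
  have hden := ((hasDerivAt_const z (1 : 𝕜)).fun_sub hu).fun_pow (n + 1)
  have hne : 1 - u z ≠ 0 := sub_ne_zero.mpr hz.symm
  refine (hnum.fun_div hden (pow_ne_zero _ hne)).congr_deriv ?_
  simp only [eulerianFrac, aeval_eulerianPoly_succ, Function.comp_apply]
  field_simp
  push_cast
  ring

theorem one_div_exp_neg_sub_one_eq_eulerianFrac_zero (z : ℂ) :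
    1 / (exp (-z) - 1) = eulerianFrac 0 (exp z) := by
  rcases eq_or_ne (exp z) 1 with h | h
  · simp [eulerianFrac, exp_neg, h]
  · have hne : 1 - exp z ≠ 0 := sub_ne_zero.mpr h.symm
    simp only [eulerianFrac, eulerianPoly, map_one, exp_neg]
    field_simp
    ring

theorem iteratedDeriv_eulerianFrac_comp_exp (m n : ℕ) {z : ℂ} (hz : exp z ≠ 1) :
    iteratedDeriv n (fun w => eulerianFrac m (exp w)) z = eulerianFrac (m + n) (exp z) := by
  induction n generalizing z with
  | zero => simp
  | succ n ih =>
    have hopen : IsOpen {w : ℂ | exp w ≠ 1} := isOpen_ne.preimage continuous_exp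
    have heq : iteratedDeriv n (fun w => eulerianFrac m (exp w))
        =ᶠ[nhds z] fun w => eulerianFrac (m + n) (exp w) := by
      filter_upwards [hopen.mem_nhds hz] with w hw using ih hw
    rw [iteratedDeriv_succ, heq.deriv_eq]
    exact ((hasDerivAt_exp z).eulerianFrac_comp hz (m + n)).deriv

theorem iteratedDeriv_one_div_exp_neg_sub_one (n : ℕ) (z : ℂ) (hz : Complex.exp z ≠ 1) :
    iteratedDeriv n (fun z : ℂ => 1 / (Complex.exp (-z) - 1)) z =
      Complex.exp z * Polynomial.aeval (Complex.exp z) (eulerianPoly n) /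
        (1 - Complex.exp z) ^ (n + 1) := by
  simp_rw [one_div_exp_neg_sub_one_eq_eulerianFrac_zero]
  rw [iteratedDeriv_eulerianFrac_comp_exp 0 n hz, zero_add, eulerianFrac]
end

section
/- For every real number w with 0 < |w| < 1, ∫₀^∞ sinh(wt)/(e^t - 1) dt = 1/(2w) - (π/2)·cot(πw). -/
open Complex Polynomial Filter

namespace SinhIntAux

open Complex Filter Set MeasureTheory
open scoped Real

noncomputable section


lemma two_pi_pos : (0:ℝ) < 2*π := by positivity

def gc (w : ℝ) : ℝ → ℂ := fun x => Complex.cos (w * x)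

lemma algAux (u v p i c m : ℂ) (hu : u ≠ 0) (hv2 : v * v = 1) (hp : p ≠ 0)
    (h1 : c - m ≠ 0) (h2 : c + m ≠ 0) :
    (1/(p - -p)) * ((-((u*v - u⁻¹*v⁻¹) * i) / (c - m) + -((u⁻¹*v - u*v⁻¹) * i) / (-(c + m))) / 2)
      = v * ((u⁻¹ - u) * i / 2) * c / (p * (c^2 - m^2)) := by
  have h3 : c^2 - m^2 ≠ 0 := by
    have := mul_ne_zero h1 h2
    intro h; apply this; linear_combination h
  have hpp : p - -p = 2*p := by ring
  rcases mul_self_eq_one_iff.mp hv2 with rfl | rfl <;>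
  · rw [hpp, div_add_div _ _ h1 (neg_ne_zero.mpr h2), div_div, div_mul_div_comm,
      div_eq_div_iff (mul_ne_zero (mul_ne_zero two_ne_zero hp)
        (mul_ne_zero (mul_ne_zero h1 (neg_ne_zero.mpr h2)) two_ne_zero)) (mul_ne_zero hp h3)]
    field_simp
    ring

lemma fourierCoeffOn_gc (w : ℝ) (hw0 : 0 < w) (hw1 : w < 1) (n : ℤ) :
    fourierCoeffOn (lt_add_of_pos_right (-π) two_pi_pos) (gc w) n
      = (-1)^n * Complex.sin (π*w) * w / (π * (w^2 - n^2)) := by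
  have hπ : (π:ℂ) ≠ 0 := by exact_mod_cast Real.pi_ne_zero
  have hn1 : |(n:ℝ)| ≠ w := by
    rcases eq_or_ne n 0 with rfl | hn
    · simpa using hw0.ne
    · have : (1:ℝ) ≤ |(n:ℝ)| := by
        rw [← Int.cast_abs]; exact_mod_cast Int.one_le_abs hn
      exact fun h => absurd (h ▸ this) (by linarith)
  have hwn : ((w:ℂ) - n) ≠ 0 := by
    rw [sub_ne_zero]
    intro h
    have : w = (n:ℝ) := by exact_mod_cast h
    rcases abs_cases (n:ℝ) with ⟨h1, _⟩ | ⟨h1, _⟩ <;> simp_all <;> linarith [abs_nonneg (n:ℝ)]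
  have hwn' : ((w:ℂ) + n) ≠ 0 := by
    intro h
    have : w = -(n:ℝ) := by
      have : (w:ℂ) = -(n:ℂ) := by linear_combination h
      exact_mod_cast this
    rcases abs_cases (n:ℝ) with ⟨h1, _⟩ | ⟨h1, _⟩ <;> simp_all <;> linarith [abs_nonneg (n:ℝ)]
  have hc1 : ((w:ℂ) - n) * I ≠ 0 := mul_ne_zero hwn I_ne_zero
  have hc2 : (-((w:ℂ) + n)) * I ≠ 0 := mul_ne_zero (neg_ne_zero.mpr hwn') I_ne_zero
  rw [fourierCoeffOn_eq_integral]
  rw [show (-π + 2*π : ℝ) = π by ring]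
  simp only [fourier_coe_apply, smul_eq_mul, gc]
  have hint : EqOn (fun x : ℝ => Complex.exp (2 * π * I * (-n) * x / (π - -π)) * Complex.cos (w * x))
      (fun x : ℝ => (Complex.exp ((((w:ℂ)-n)*I)*x) + Complex.exp (((-((w:ℂ)+n))*I)*x))/2)
      (Set.uIcc (-π) π) := by
    intro x _
    simp only
    rw [show (2 * (π:ℂ) * I * (-(n:ℤ):ℂ) * x / ((π:ℂ) - -π)) = -((n:ℂ)*x*I) by
      push_cast
      rw [show ((π:ℂ) - -π) = 2*π by ring, div_eq_iff (by simpa using hπ)]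
      ring]
    unfold Complex.cos
    rw [mul_comm, div_mul_eq_mul_div, add_mul, ← Complex.exp_add, ← Complex.exp_add]
    ring_nf
  rw [intervalIntegral.integral_congr (by
      intro x hx
      have := hint hx
      push_cast
      push_cast at this
      convert this using 3)]
  have i1 : IntervalIntegrable (fun x:ℝ => Complex.exp (((w:ℂ)-(n:ℂ))*I*x)) volume (-π) π :=
    Continuous.intervalIntegrable (by continuity) _ _
  have i2 : IntervalIntegrable (fun x:ℝ => Complex.exp ((-((w:ℂ)+(n:ℂ)))*I*x)) volume (-π) π :=
    Continuous.intervalIntegrable (by continuity) _ _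
  rw [intervalIntegral.integral_div, intervalIntegral.integral_add i1 i2,
    integral_exp_mul_complex hc1, integral_exp_mul_complex hc2]
  have hu : Complex.exp ((w:ℂ)*π*I) ≠ 0 := Complex.exp_ne_zero _
  have E1 : cexp (((w:ℂ) - n) * I * (π:ℝ)) = cexp ((w:ℂ)*π*I) * cexp (-((n:ℂ)*π*I)) := by
    rw [← Complex.exp_add]; push_cast; ring_nf
  have E2 : cexp (((w:ℂ) - n) * I * ((-π : ℝ):ℂ)) = (cexp ((w:ℂ)*π*I))⁻¹ * (cexp (-((n:ℂ)*π*I)))⁻¹ := by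
    rw [← Complex.exp_neg, ← Complex.exp_neg, ← Complex.exp_add]; push_cast; ring_nf
  have E3 : cexp (-((w:ℂ) + n) * I * (π:ℝ)) = (cexp ((w:ℂ)*π*I))⁻¹ * cexp (-((n:ℂ)*π*I)) := by
    rw [← Complex.exp_neg, ← Complex.exp_add]; push_cast; ring_nf
  have E4 : cexp (-((w:ℂ) + n) * I * ((-π : ℝ):ℂ)) = cexp ((w:ℂ)*π*I) * (cexp (-((n:ℂ)*π*I)))⁻¹ := by
    rw [← Complex.exp_neg, ← Complex.exp_add]; push_cast; ring_nf
  have Esin : Complex.sin ((π:ℝ) * (w:ℝ)) = ((cexp ((w:ℂ)*π*I))⁻¹ - cexp ((w:ℂ)*π*I)) * I / 2 := by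
    unfold Complex.sin
    rw [← Complex.exp_neg]
    push_cast
    ring_nf
  have hbn : cexp (-((n:ℂ) * ↑π * I)) = ((-1 : ℂ))^n := by
    rw [show -((n:ℂ)*(π:ℂ)*I) = ((-n : ℤ) : ℂ) * ((π:ℂ)*I) by push_cast; ring,
      Complex.exp_int_mul, Complex.exp_pi_mul_I]
    rcases Int.even_or_odd n with he | ho
    · rw [he.neg_one_zpow, (he.neg).neg_one_zpow]
    · rw [ho.neg_one_zpow, (ho.neg).neg_one_zpow]
  have hI : ∀ z c : ℂ, z / (c * I) = -(z * I) / c := fun z c => by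
    rw [div_mul_eq_div_div, Complex.div_I]; ring
  have hb2 : cexp (-((n:ℂ) * ↑π * I)) * cexp (-((n:ℂ) * ↑π * I)) = 1 := by
    rw [← Complex.exp_add, show -((n:ℂ)*↑π*I) + -((n:ℂ)*↑π*I) = ((-n : ℤ):ℂ) * (2*↑π*I) by
      push_cast; ring, Complex.exp_int_mul_two_pi_mul_I]
  rw [E1, E2, E3, E4, Esin, ← hbn, hI, hI, real_smul]
  push_cast
  exact algAux _ _ _ _ _ _ hu hb2 hπ hwn hwn'

instance fact_two_pi : Fact (0 < 2*π) := ⟨two_pi_pos⟩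

def Fc (w : ℝ) : C(AddCircle (2*π), ℂ) :=
  ⟨AddCircle.liftIco (2*π) (-π) (gc w),
   AddCircle.liftIco_continuous
     (by simp only [gc]; push_cast
         rw [show (w:ℂ) * -(π:ℂ) = -((w:ℂ)*π) by ring,
           show (w:ℂ) * (-(π:ℂ) + 2*π) = (w:ℂ)*π by ring, Complex.cos_neg])
     (Continuous.continuousOn (by unfold gc; continuity))⟩

lemma fourierCoeff_Fc (w : ℝ) (hw0 : 0 < w) (hw1 : w < 1) (n : ℤ) :
    fourierCoeff (⇑(Fc w)) n = (-1)^n * Complex.sin (π*w) * w / (π * (w^2 - n^2)) := by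
  rw [show ⇑(Fc w) = AddCircle.liftIco (2*π) (-π) (gc w) from rfl,
    fourierCoeff_liftIco_eq (gc w) n]
  exact fourierCoeffOn_gc w hw0 hw1 n

lemma norm_coeff_eq (w : ℝ) (A : ℂ) (n : ℤ) :
    ‖(-1:ℂ)^n * A * w / (π * ((w:ℂ)^2 - (n:ℂ)^2))‖
      = ‖A‖ * |w| * (1 / (|π| * |w^2 - (n:ℝ)^2|)) := by
  rw [norm_div, norm_mul, norm_mul, norm_zpow, norm_mul,
    show ((w:ℂ)^2 - (n:ℂ)^2) = ((w^2 - (n:ℝ)^2 : ℝ) : ℂ) by push_cast; ring]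
  simp only [norm_neg, norm_one, one_zpow, Complex.norm_real, Real.norm_eq_abs, one_mul]
  ring

lemma summable_shape (w : ℝ) (hw0 : 0 < w) (hw1 : w < 1) :
    Summable (fun n : ℕ => 1 / (|π| * |w^2 - (n:ℝ)^2|)) := by
  rw [← summable_nat_add_iff 1]
  have hb : ∀ n : ℕ, 1 / (|π| * |w^2 - ((n+1:ℕ):ℝ)^2|)
      ≤ (1/(π * (1 - w^2))) * (1/((n+1:ℕ):ℝ)^2) := by
    intro n
    have h1 : (1:ℝ) ≤ ((n+1:ℕ):ℝ) := by exact_mod_cast Nat.one_le_iff_ne_zero.mpr (Nat.succ_ne_zero n)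
    have h1' : (1:ℝ) ≤ ((n+1:ℕ):ℝ)^2 := by nlinarith
    have h2 : ((n+1:ℕ):ℝ)^2 * (1 - w^2) ≤ ((n+1:ℕ):ℝ)^2 - w^2 := by
      nlinarith [mul_le_mul_of_nonneg_left h1' (sq_nonneg w)]
    have h3 : (0:ℝ) < ((n+1:ℕ):ℝ)^2 - w^2 := by nlinarith
    rw [abs_of_pos Real.pi_pos, abs_of_neg (by linarith : w^2 - ((n+1:ℕ):ℝ)^2 < 0),
      div_mul_div_comm, one_mul, div_le_div_iff₀
        (mul_pos Real.pi_pos (by linarith))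
        (mul_pos (mul_pos Real.pi_pos (by nlinarith)) (by positivity))]
    have hp := Real.pi_pos
    nlinarith [mul_le_mul_of_nonneg_left h2 hp.le]
  apply Summable.of_nonneg_of_le (fun n => by positivity) hb
  apply Summable.mul_left
  exact_mod_cast (summable_nat_add_iff 1).mpr (Real.summable_one_div_nat_pow.mpr one_lt_two)

lemma summable_coeff (w : ℝ) (hw0 : 0 < w) (hw1 : w < 1) :
    Summable (fourierCoeff (⇑(Fc w))) := by
  apply Summable.of_norm
  have he : ∀ n : ℤ, ‖fourierCoeff (⇑(Fc w)) n‖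
      = ‖Complex.sin (π*w)‖ * |w| * (1 / (|π| * |w^2 - ((n:ℤ):ℝ)^2|)) := by
    intro n
    rw [fourierCoeff_Fc w hw0 hw1 n, norm_coeff_eq]
  rw [funext he]
  apply Summable.of_nat_of_neg <;>
  · apply Summable.mul_left
    refine (summable_shape w hw0 hw1).congr fun n => ?_
    push_cast
    norm_num

lemma hasSum_int_cot (w : ℝ) (hw0 : 0 < w) (hw1 : w < 1) :
    HasSum (fun n : ℤ => Complex.sin (π*w) * w / (π * ((w:ℂ)^2 - (n:ℂ)^2)))
      (Complex.cos (π*w)) := by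
  have h := has_pointwise_sum_fourier_series_of_summable (summable_coeff w hw0 hw1)
      (((-π : ℝ) : AddCircle (2*π)))
  have hFx : (Fc w) (((-π : ℝ) : AddCircle (2*π))) = Complex.cos (π*w) := by
    show AddCircle.liftIco (2*π) (-π) (gc w) _ = _
    rw [AddCircle.liftIco_coe_apply ⟨le_refl _, by linarith [Real.pi_pos]⟩]
    simp only [gc]
    rw [show (w:ℂ) * ((-π:ℝ):ℂ) = -((π:ℂ)*w) by push_cast; ring, Complex.cos_neg]
  have hfour : ∀ n : ℤ, (fourier n) (((-π : ℝ) : AddCircle (2*π))) = (-1:ℂ)^n := by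
    intro n
    rw [fourier_coe_apply]
    rw [show 2*(π:ℝ)*Complex.I*(n:ℂ)*((-π:ℝ):ℂ)/((2*π:ℝ):ℂ) = ((-n:ℤ):ℂ)*((π:ℂ)*Complex.I) by
      push_cast
      rw [div_eq_iff (by simp [Real.pi_ne_zero] : (2*(π:ℂ)) ≠ 0)]
      ring]
    rw [Complex.exp_int_mul, Complex.exp_pi_mul_I]
    rcases Int.even_or_odd n with he | ho
    · rw [he.neg_one_zpow, he.neg.neg_one_zpow]
    · rw [ho.neg_one_zpow, ho.neg.neg_one_zpow]
  have heq : (fun n : ℤ => fourierCoeff (⇑(Fc w)) n • (fourier n) (((-π:ℝ) : AddCircle (2*π))))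
      = fun n : ℤ => Complex.sin (π*w) * w / (π * ((w:ℂ)^2 - (n:ℂ)^2)) := by
    funext n
    rw [smul_eq_mul, fourierCoeff_Fc w hw0 hw1 n, hfour n]
    have hsq : ((-1:ℂ)^n) * ((-1:ℂ)^n) = 1 := by
      rcases Int.even_or_odd n with he | ho
      · rw [he.neg_one_zpow]; norm_num
      · rw [ho.neg_one_zpow]; norm_num
    linear_combination (Complex.sin (π*w) * w / (π * ((w:ℂ)^2 - (n:ℂ)^2))) * hsq
  rwa [heq, hFx] at h

lemma hasSum_cot (w : ℝ) (hw0 : 0 < w) (hw1 : w < 1) :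
    HasSum (fun n : ℕ => w / (((n:ℝ)+1)^2 - w^2)) (1/(2*w) - (π/2) * Real.cot (π*w)) := by
  have hπ := Real.pi_pos
  have hπc : (π:ℂ) ≠ 0 := Complex.ofReal_ne_zero.mpr Real.pi_ne_zero
  have hw : (w:ℂ) ≠ 0 := Complex.ofReal_ne_zero.mpr hw0.ne'
  have hsr : 0 < Real.sin (π*w) :=
    Real.sin_pos_of_pos_of_lt_pi (by positivity) (by nlinarith)
  have hS : Complex.sin ((π:ℂ)*w) ≠ 0 := by
    rw [show ((π:ℝ):ℂ)*(w:ℂ) = ((π*w : ℝ):ℂ) by push_cast; ring, ← Complex.ofReal_sin]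
    exact_mod_cast hsr.ne'
  set S := Complex.sin ((π:ℂ)*w) with hSdef
  set f : ℤ → ℂ := fun n => S * w / (π * ((w:ℂ)^2 - (n:ℂ)^2)) with hfdef
  have T0 : HasSum (fun n : ℕ => f n + f (-(n:ℤ))) (Complex.cos (π*w) + f 0) :=
    (hasSum_int_cot w hw0 hw1).nat_add_neg
  set g : ℕ → ℂ := fun n => f n + f (-(n:ℤ)) with hgdef
  have e1 : Complex.cos (π*w) + f 0 = (Complex.cos (π*w) + f 0 - g 0) + ∑ i ∈ Finset.range 1, g i := by
    simp only [Finset.range_one, Finset.sum_singleton]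
    ring
  rw [e1] at T0
  have T1 : HasSum (fun n : ℕ => g (n+1)) (Complex.cos (π*w) + f 0 - g 0) :=
    (hasSum_nat_add_iff 1).mpr T0
  have T2 := T1.mul_left (-(π:ℂ)/(2*S))
  have hterm : ∀ n : ℕ, (-(π:ℂ)/(2*S)) * g (n+1) = (w:ℂ) / (((n:ℂ)+1)^2 - (w:ℂ)^2) := by
    intro n
    have hd : ((w:ℂ)^2 - ((n:ℂ)+1)^2) ≠ 0 := by
      intro h
      have h2 : (w:ℝ)^2 = ((n:ℝ)+1)^2 := by exact_mod_cast sub_eq_zero.mp h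
      nlinarith [Nat.cast_nonneg (α := ℝ) n]
    have hd' : ((n:ℂ)+1)^2 - (w:ℂ)^2 ≠ 0 := fun h => hd (by linear_combination -h)
    simp only [hgdef, hfdef]
    push_cast
    rw [neg_sq]
    rw [div_add_div _ _ (mul_ne_zero hπc hd) (mul_ne_zero hπc hd), div_mul_div_comm,
      div_eq_div_iff (mul_ne_zero (mul_ne_zero two_ne_zero hS)
        (mul_ne_zero (mul_ne_zero hπc hd) (mul_ne_zero hπc hd))) hd']
    ring
  have hsum : (-(π:ℂ)/(2*S)) * (Complex.cos (π*w) + f 0 - g 0)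
      = 1/(2*(w:ℂ)) - ((π:ℂ)/2) * (Complex.cos ((π:ℂ)*w) / S) := by
    simp only [hgdef, hfdef]
    push_cast
    field_simp
    ring
  rw [funext hterm, hsum] at T2
  have hrhs : ((1/(2*w) - (π/2) * Real.cot (π*w) : ℝ) : ℂ)
      = 1/(2*(w:ℂ)) - ((π:ℂ)/2) * (Complex.cos ((π:ℂ)*w) / S) := by
    rw [Real.cot_eq_cos_div_sin, hSdef,
      show ((π:ℝ):ℂ)*(w:ℂ) = ((π*w:ℝ):ℂ) by push_cast; ring,
      ← Complex.ofReal_cos, ← Complex.ofReal_sin]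
    push_cast
    ring
  have hterm2 : (fun n : ℕ => (w:ℂ)/(((n:ℂ)+1)^2-(w:ℂ)^2))
      = fun n : ℕ => ((w/(((n:ℝ)+1)^2 - w^2) : ℝ) : ℂ) := funext fun n => by push_cast; ring
  rw [hterm2, ← hrhs] at T2
  exact Complex.hasSum_ofReal.mp T2

lemma int_exp_Ioi (b : ℝ) (hb : 0 < b) :
    ∫ t in Set.Ioi (0:ℝ), Real.exp (-b*t) = 1/b := by
  have h := integral_comp_mul_left_Ioi (fun x => Real.exp (-x)) 0 hb
  simp only [neg_mul] at h ⊢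
  rw [show (fun t:ℝ => Real.exp (-(b*t))) = fun t:ℝ => (fun x => Real.exp (-x)) (b*t) from rfl]
  rw [h, mul_zero, integral_exp_neg_Ioi, neg_zero, Real.exp_zero, smul_eq_mul, mul_one, one_div]

def fn (w : ℝ) (n : ℕ) : ℝ → ℝ := fun t => (Real.exp (-(n+1-w)*t) - Real.exp (-(n+1+w)*t))/2

lemma fn_integrable (w : ℝ) (hw0 : 0 < w) (hw1 : w < 1) (n : ℕ) :
    IntegrableOn (fn w n) (Set.Ioi 0) := by
  apply Integrable.div_const
  have hc := Nat.cast_nonneg (α := ℝ) n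
  exact (exp_neg_integrableOn_Ioi 0 (by linarith : (0:ℝ) < (n:ℝ)+1-w)).sub
    (exp_neg_integrableOn_Ioi 0 (by linarith : (0:ℝ) < (n:ℝ)+1+w))

lemma fn_integral (w : ℝ) (hw0 : 0 < w) (hw1 : w < 1) (n : ℕ) :
    ∫ t in Set.Ioi (0:ℝ), fn w n t = w / (((n:ℝ)+1)^2 - w^2) := by
  have hc := Nat.cast_nonneg (α := ℝ) n
  have h1 : (0:ℝ) < (n:ℝ)+1-w := by linarith
  have h2 : (0:ℝ) < (n:ℝ)+1+w := by linarith
  unfold fn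
  rw [MeasureTheory.integral_div, MeasureTheory.integral_sub
    (exp_neg_integrableOn_Ioi 0 h1) (exp_neg_integrableOn_Ioi 0 h2),
    int_exp_Ioi _ h1, int_exp_Ioi _ h2]
  have h3 : ((n:ℝ)+1)^2 - w^2 ≠ 0 := by nlinarith [mul_pos h1 h2]
  field_simp
  ring

lemma fn_nonneg (w : ℝ) (hw0 : 0 < w) (n : ℕ) {t : ℝ} (ht : 0 < t) : 0 ≤ fn w n t := by
  unfold fn
  have : Real.exp (-((n:ℝ)+1+w)*t) ≤ Real.exp (-((n:ℝ)+1-w)*t) := by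
    apply Real.exp_le_exp.mpr
    nlinarith
  linarith

lemma fn_norm_integral (w : ℝ) (hw0 : 0 < w) (hw1 : w < 1) (n : ℕ) :
    ∫ t in Set.Ioi (0:ℝ), ‖fn w n t‖ = w / (((n:ℝ)+1)^2 - w^2) := by
  rw [← fn_integral w hw0 hw1 n]
  apply MeasureTheory.setIntegral_congr_fun measurableSet_Ioi
  intro t ht
  exact Real.norm_of_nonneg (fn_nonneg w hw0 n ht)

lemma fn_tsum (w : ℝ) (hw0 : 0 < w) (hw1 : w < 1) {t : ℝ} (ht : 0 < t) :
    ∑' n : ℕ, fn w n t = Real.sinh (w*t) / (Real.exp t - 1) := by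
  have hr0 : 0 ≤ Real.exp (-t) := (Real.exp_pos _).le
  have hr1 : Real.exp (-t) < 1 := Real.exp_lt_one_iff.mpr (by linarith)
  have he1 : Real.exp t ≠ 0 := Real.exp_ne_zero t
  have he3 : Real.exp t - 1 ≠ 0 := by
    have h := Real.exp_lt_exp.mpr ht
    rw [Real.exp_zero] at h
    intro hc; rw [sub_eq_zero] at hc; rw [hc] at h; exact lt_irrefl _ h
  have hfn : ∀ n : ℕ, fn w n t
      = ((Real.exp ((w-1)*t) - Real.exp (-(1+w)*t))/2) * (Real.exp (-t))^n := by
    intro n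
    unfold fn
    rw [← Real.exp_nat_mul, div_mul_eq_mul_div, sub_mul, ← Real.exp_add, ← Real.exp_add]
    congr 2 <;> ring
  rw [funext hfn, tsum_mul_left, tsum_geometric_of_lt_one hr0 hr1, Real.sinh_eq,
    show (w-1)*t = w*t + -t by ring, show -(1+w)*t = -(w*t) + -t by ring,
    Real.exp_add, Real.exp_add, Real.exp_neg t, Real.exp_neg (w*t)]
  have he4 : 1 - (Real.exp t)⁻¹ ≠ 0 := by
    have h := Real.exp_lt_exp.mpr ht
    rw [Real.exp_zero] at h
    have : (Real.exp t)⁻¹ < 1 := by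
      rw [inv_lt_one_iff₀]; right; exact h
    linarith
  field_simp

lemma core (w : ℝ) (hw0 : 0 < w) (hw1 : w < 1) :
    ∫ t in Set.Ioi (0:ℝ), Real.sinh (w*t)/(Real.exp t - 1)
      = 1/(2*w) - (π/2) * Real.cot (π*w) := by
  have hsum := hasSum_cot w hw0 hw1
  have hsummable : Summable fun i : ℕ => ∫ t in Set.Ioi (0:ℝ), ‖fn w i t‖ := by
    refine hsum.summable.congr fun n => ?_
    exact (fn_norm_integral w hw0 hw1 n).symm
  have hint := MeasureTheory.integral_tsum_of_summable_integral_norm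
    (μ := MeasureTheory.volume.restrict (Set.Ioi 0)) (fn_integrable w hw0 hw1) hsummable
  have h1 : ∫ t in Set.Ioi (0:ℝ), Real.sinh (w*t)/(Real.exp t - 1)
      = ∫ t in Set.Ioi (0:ℝ), ∑' n : ℕ, fn w n t := by
    refine MeasureTheory.setIntegral_congr_fun measurableSet_Ioi fun t ht => ?_
    exact (fn_tsum w hw0 hw1 ht).symm
  rw [h1, ← hint]
  rw [tsum_congr (fun n => fn_integral w hw0 hw1 n)]
  exact hsum.tsum_eq


end

end SinhIntAux

theorem integral_sinh_div_exp_sub_one (w : ℝ) (hw0 : 0 < |w|) (hw1 : |w| < 1) :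
    ∫ t in Set.Ioi (0 : ℝ), Real.sinh (w * t) / (Real.exp t - 1) =
      1 / (2 * w) - (Real.pi / 2) * Real.cot (Real.pi * w) := by
  rcases (abs_pos.mp hw0).lt_or_gt with hneg | hpos
  · have hcore := SinhIntAux.core (-w) (by linarith) (by rwa [abs_of_neg hneg] at hw1)
    have hL : ∫ t in Set.Ioi (0:ℝ), Real.sinh (w*t)/(Real.exp t - 1)
        = -∫ t in Set.Ioi (0:ℝ), Real.sinh (-w*t)/(Real.exp t - 1) := by
      rw [← MeasureTheory.integral_neg]
      refine MeasureTheory.integral_congr_ae (Filter.EventuallyEq.of_eq (funext fun t => ?_))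
      rw [show w*t = -(-w*t) by ring, Real.sinh_neg]
      ring
    rw [hL, hcore, show Real.pi*(-w) = -(Real.pi*w) by ring, Real.cot_eq_cos_div_sin,
      Real.cot_eq_cos_div_sin, Real.cos_neg, Real.sin_neg, div_neg]
    ring
  · exact SinhIntAux.core w hpos (by rwa [abs_of_pos hpos] at hw1)
end

section
/- For every integer N ≥ 1 and every complex w ∉ πℤ, the (2N)-th derivative of cot satisfies cot^{(2N)}(w) = 2 ∑_{k=1}^{N} E(2N, N-k) cos((2k-1)w) / sin^{2N+1}(w). -/
set_option maxHeartbeats 1000000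

open Complex Polynomial Filter

lemma EP_succ (n : ℕ) : eulerianPoly (n+1) = (1 + Polynomial.C (n : ℤ) * Polynomial.X) * eulerianPoly n
      + Polynomial.X * (1 - Polynomial.X) * Polynomial.derivative (eulerianPoly n) := by
  rw [eulerianPoly]

lemma EP_one : eulerianPoly 1 = 1 := by rw [EP_succ]; simp [eulerianPoly]

lemma degEP : ∀ n, (eulerianPoly (n+1)).natDegree ≤ n := by
  intro n
  induction n with
  | zero => simp [EP_one]
  | succ m IH =>
    rw [EP_succ (m+1)]
    refine le_trans (Polynomial.natDegree_add_le _ _) ?_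
    refine max_le ?_ ?_
    · refine le_trans (Polynomial.natDegree_mul_le) ?_
      have h2 : (Polynomial.C ((m+1 : ℕ) : ℤ) * Polynomial.X).natDegree ≤ 1 :=
        le_trans (Polynomial.natDegree_C_mul_le _ _) (le_of_eq Polynomial.natDegree_X)
      have h1 : (1 + Polynomial.C ((m+1 : ℕ) : ℤ) * Polynomial.X).natDegree ≤ 1 := by
        refine le_trans (Polynomial.natDegree_add_le _ _) ?_
        rw [Polynomial.natDegree_one]
        omega
      omega
    · by_cases hd : Polynomial.derivative (eulerianPoly (m+1)) = 0
      · simp [hd]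
      · have hne : (eulerianPoly (m+1)).natDegree ≠ 0 := by
          intro h0
          obtain ⟨a, ha⟩ := Polynomial.natDegree_eq_zero.mp h0
          rw [← ha] at hd
          simp at hd
        have h2 : (Polynomial.derivative (eulerianPoly (m+1))).natDegree ≤ m - 1 := by
          refine le_trans (Polynomial.natDegree_derivative_le _) ?_
          omega
        refine le_trans (Polynomial.natDegree_mul_le) ?_
        have h3 : (Polynomial.X * (1 - Polynomial.X) : Polynomial ℤ).natDegree ≤ 2 := by
          refine le_trans (Polynomial.natDegree_mul_le) ?_
          have : (1 - Polynomial.X : Polynomial ℤ).natDegree ≤ 1 := by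
            refine le_trans (Polynomial.natDegree_sub_le _ _) ?_
            simp
          simp [Polynomial.natDegree_X]
          omega
        omega

lemma coeff_X_mul_der (p : Polynomial ℤ) (k : ℕ) :
    (Polynomial.X * Polynomial.derivative p).coeff k = (k : ℤ) * p.coeff k := by
  cases k with
  | zero => simp [Polynomial.mul_coeff_zero]
  | succ j =>
    rw [Polynomial.coeff_X_mul, Polynomial.coeff_derivative]
    push_cast
    ring

lemma coeffRec (n k : ℕ) : (eulerianPoly (n+1)).coeff (k+1)
    = ((k:ℤ)+2) * (eulerianPoly n).coeff (k+1) + ((n:ℤ) - (k:ℤ)) * (eulerianPoly n).coeff k := by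
  have hsplit : eulerianPoly (n+1) = eulerianPoly n + Polynomial.C (n:ℤ) * (Polynomial.X * eulerianPoly n)
      + (Polynomial.X * Polynomial.derivative (eulerianPoly n)
        - Polynomial.X * (Polynomial.X * Polynomial.derivative (eulerianPoly n))) := by
    rw [EP_succ]; ring
  rw [hsplit]
  simp only [Polynomial.coeff_add, Polynomial.coeff_sub, Polynomial.coeff_C_mul,
    Polynomial.coeff_X_mul, coeff_X_mul_der, Polynomial.coeff_derivative]
  push_cast
  ring

lemma coeff0 (n : ℕ) : (eulerianPoly (n+1)).coeff 0 = (eulerianPoly n).coeff 0 := by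
  have hsplit : eulerianPoly (n+1) = eulerianPoly n + Polynomial.C (n:ℤ) * (Polynomial.X * eulerianPoly n)
      + (Polynomial.X * Polynomial.derivative (eulerianPoly n)
        - Polynomial.X * (Polynomial.X * Polynomial.derivative (eulerianPoly n))) := by
    rw [EP_succ]; ring
  rw [hsplit]
  simp [Polynomial.mul_coeff_zero]

lemma symEP : ∀ n j k, j + k + 1 = n → (eulerianPoly n).coeff j = (eulerianPoly n).coeff k := by
  intro n
  induction n with
  | zero => intro j k h; omega
  | succ n IH =>
    intro j k hjk
    match n, j, k with
    | 0, j, k =>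
      have hj : j = 0 := by omega
      have hk : k = 0 := by omega
      subst hj; subst hk; rfl
    | (m+1), 0, k =>
      have hk : k = m + 1 := by omega
      subst hk
      have h1 := coeffRec (m+1) m
      have hz : (eulerianPoly (m+1)).coeff (m+1) = 0 :=
        Polynomial.coeff_eq_zero_of_natDegree_lt (by have := degEP m; omega)
      have h2 : (eulerianPoly (m+1)).coeff m = (eulerianPoly (m+1)).coeff 0 := IH m 0 (by omega)
      rw [coeff0, h1, hz, h2]
      push_cast
      ring
    | (m+1), j, 0 =>
      have hj : j = m + 1 := by omega
      subst hj
      have h1 := coeffRec (m+1) m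
      have hz : (eulerianPoly (m+1)).coeff (m+1) = 0 :=
        Polynomial.coeff_eq_zero_of_natDegree_lt (by have := degEP m; omega)
      have h2 : (eulerianPoly (m+1)).coeff m = (eulerianPoly (m+1)).coeff 0 := IH m 0 (by omega)
      rw [coeff0, h1, hz, h2]
      push_cast
      ring
    | (m+1), (j'+1), (k'+1) =>
      have hjk' : j' + k' + 1 = m := by omega
      have e1 : (eulerianPoly (m+1)).coeff (j'+1) = (eulerianPoly (m+1)).coeff k' :=
        IH (j'+1) k' (by omega)
      have e2 : (eulerianPoly (m+1)).coeff j' = (eulerianPoly (m+1)).coeff (k'+1) :=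
        IH j' (k'+1) (by omega)
      rw [coeffRec (m+1) j', coeffRec (m+1) k', e1, e2]
      have hc1 : ((m:ℤ)+1) - (j':ℤ) = (k':ℤ) + 2 := by omega
      have hc2 : ((m:ℤ)+1) - (k':ℤ) = (j':ℤ) + 2 := by omega
      push_cast
      rw [hc1, hc2]
      ring

noncomputable def QE (n : ℕ) : Polynomial ℂ := (eulerianPoly n).map (Int.castRingHom ℂ)

lemma QE_zero : QE 0 = 1 := by simp [QE]; rw [show eulerianPoly 0 = 1 from rfl]; simp

lemma QE_succ (n : ℕ) : QE (n+1) = (1 + Polynomial.C (n:ℂ) * Polynomial.X) * QE n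
    + Polynomial.X * (1 - Polynomial.X) * Polynomial.derivative (QE n) := by
  rw [QE, EP_succ]
  simp only [Polynomial.map_add, Polynomial.map_mul, Polynomial.map_one,
    Polynomial.map_X, Polynomial.map_C, Polynomial.map_sub, Polynomial.derivative_map]
  norm_num [QE]

noncomputable def Fc (n : ℕ) (w : ℂ) : ℂ :=
  (-1:ℂ)^n * (Complex.exp (((n:ℂ)-1)*I*w) * (QE n).eval (Complex.exp (-2*I*w)) / Complex.sin w ^ (n+1))

lemma hasDerivAt_Fc (n : ℕ) (w : ℂ) (hs : Complex.sin w ≠ 0) :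
    HasDerivAt (Fc n) (Fc (n+1) w) w := by
  have hA : HasDerivAt (fun w : ℂ => Complex.exp (((n:ℂ)-1)*I*w))
      (Complex.exp (((n:ℂ)-1)*I*w) * (((n:ℂ)-1)*I*1)) w :=
    ((hasDerivAt_id w).const_mul (((n:ℂ)-1)*I)).cexp
  have hBin : HasDerivAt (fun w : ℂ => Complex.exp (-2*I*w)) (Complex.exp (-2*I*w) * (-2*I*1)) w :=
    ((hasDerivAt_id w).const_mul (-2*I)).cexp
  have hB : HasDerivAt (fun w : ℂ => (QE n).eval (Complex.exp (-2*I*w)))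
      ((QE n).derivative.eval (Complex.exp (-2*I*w)) * (Complex.exp (-2*I*w) * (-2*I*1))) w :=
    HasDerivAt.comp w ((QE n).hasDerivAt _) hBin
  have hS : HasDerivAt (fun w : ℂ => Complex.sin w ^ (n+1))
      (((n+1 : ℕ):ℂ) * Complex.sin w ^ n * Complex.cos w) w :=
    (Complex.hasDerivAt_sin w).pow (n+1)
  have hD : HasDerivAt (Fc n)
      ((-1:ℂ)^n * (((Complex.exp (((n:ℂ)-1)*I*w) * (((n:ℂ)-1)*I*1) * (QE n).eval (Complex.exp (-2*I*w))
        + Complex.exp (((n:ℂ)-1)*I*w) * ((QE n).derivative.eval (Complex.exp (-2*I*w)) * (Complex.exp (-2*I*w) * (-2*I*1))))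
          * Complex.sin w ^ (n+1)
        - Complex.exp (((n:ℂ)-1)*I*w) * (QE n).eval (Complex.exp (-2*I*w))
          * (((n+1 : ℕ):ℂ) * Complex.sin w ^ n * Complex.cos w)) / (Complex.sin w ^ (n+1)) ^ 2)) w := by
    unfold Fc
    exact ((hA.mul hB).div hS (pow_ne_zero _ hs)).const_mul _
  convert hD using 1
  unfold Fc
  have hb : Complex.exp (-(w*I)) = Complex.cos w - Complex.sin w * I := by
    rw [show -(w*I) = (-w)*I by ring, Complex.exp_mul_I, Complex.cos_neg, Complex.sin_neg]
    ring
  have ht : Complex.exp (-2*I*w) = (Complex.cos w - Complex.sin w * I)^2 := by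
    rw [← hb, sq, ← Complex.exp_add]
    congr 1
    ring
  have h1 : Complex.exp ((((n+1 : ℕ):ℂ)-1)*I*w)
      = Complex.exp (((n:ℂ)-1)*I*w) * (Complex.cos w + Complex.sin w * I) := by
    rw [← Complex.exp_mul_I, ← Complex.exp_add]
    congr 1
    push_cast
    ring
  have hev : (QE (n+1)).eval ((Complex.cos w - Complex.sin w * I)^2)
      = (1 + (n:ℂ) * ((Complex.cos w - Complex.sin w * I)^2)) * (QE n).eval ((Complex.cos w - Complex.sin w * I)^2)
        + ((Complex.cos w - Complex.sin w * I)^2) * (1 - (Complex.cos w - Complex.sin w * I)^2)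
          * (QE n).derivative.eval ((Complex.cos w - Complex.sin w * I)^2) := by
    rw [QE_succ]
    simp [Polynomial.eval_add, Polynomial.eval_mul]
  rw [ht, h1, hev]
  set P := (QE n).eval ((Complex.cos w - Complex.sin w * I)^2) with hP
  set P' := (QE n).derivative.eval ((Complex.cos w - Complex.sin w * I)^2) with hP'
  set s := Complex.sin w with hsw
  set c := Complex.cos w with hcw
  set E := Complex.exp (((n:ℂ)-1)*I*w) with hE
  rw [← mul_div_assoc, ← mul_div_assoc]
  rw [div_eq_div_iff (pow_ne_zero _ hs) (pow_ne_zero _ (pow_ne_zero _ hs))]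
  have hpyth : s^2 + c^2 = 1 := Complex.sin_sq_add_cos_sq w
  push_cast
  linear_combination ((-1:ℂ)^n * E * s^n * s^n *
      (s^3*(n:ℂ)*P*I + s^5*P'*I - c*s^2*(n:ℂ)*P - 3*c*s^4*P' - 3*c^2*s^3*P'*I + c^3*s^2*P')) * hpyth
    + ((-1:ℂ)^n * E * s^n * s^n *
      (s^5*P'*I - s^5*(n:ℂ)*P*I - s^7*P'*I + s^7*P'*I^3 - 3*c*s^4*P' + c*s^4*(n:ℂ)*P
        + 3*c*s^6*P' - 3*c*s^6*P'*I^2 + 2*c^2*s^5*P'*I + 2*c^3*s^4*P')) * Complex.I_sq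

lemma cot_eq_Fc (z : ℂ) (hz : Complex.sin z ≠ 0) : Complex.cot z = Fc 0 z + I := by
  unfold Fc
  rw [QE_zero]
  norm_num
  rw [Complex.cot_eq_cos_div_sin, div_add' _ _ _ hz, div_eq_div_iff hz hz]
  rw [show -(I*z) = (-z)*I by ring, Complex.exp_mul_I, Complex.cos_neg, Complex.sin_neg]
  ring

lemma isOpen_sin_ne : IsOpen {z : ℂ | Complex.sin z ≠ 0} :=
  isOpen_ne.preimage Complex.continuous_sin

lemma main_formula : ∀ n, ∀ w : ℂ, Complex.sin w ≠ 0 →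
    iteratedDeriv (n+1) Complex.cot w = Fc (n+1) w := by
  intro n
  induction n with
  | zero =>
    intro w hs
    rw [iteratedDeriv_one]
    have hev : Complex.cot =ᶠ[nhds w] (fun z => Fc 0 z + I) :=
      eventuallyEq_of_mem (isOpen_sin_ne.mem_nhds hs) (fun z hz => cot_eq_Fc z hz)
    rw [hev.deriv_eq]
    exact ((hasDerivAt_Fc 0 w hs).add_const I).deriv
  | succ n IH =>
    intro w hs
    rw [iteratedDeriv_succ]
    have hev : iteratedDeriv (n+1) Complex.cot =ᶠ[nhds w] Fc (n+1) :=
      eventuallyEq_of_mem (isOpen_sin_ne.mem_nhds hs) (fun z hz => IH z hz)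
    rw [hev.deriv_eq]
    exact (hasDerivAt_Fc (n+1) w hs).deriv

lemma Fc_even (N : ℕ) (hN : 1 ≤ N) (w : ℂ) :
    Fc (2*N) w = 2 * (∑ k ∈ Finset.Icc 1 N,
          (eulerianNum (2 * N) (N - k) : ℂ) * Complex.cos ((2 * (k : ℂ) - 1) * w)) /
        Complex.sin w ^ (2 * N + 1) := by
  unfold Fc
  rw [show ((-1:ℂ))^(2*N) = 1 by rw [pow_mul]; norm_num, one_mul]
  have hdeg : (QE (2*N)).natDegree < 2*N := by
    obtain ⟨m, hm⟩ : ∃ m, 2*N = m+1 := ⟨2*N-1, by omega⟩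
    have h1 : (QE (2*N)).natDegree ≤ (eulerianPoly (2*N)).natDegree :=
      Polynomial.natDegree_map_le
    have h2 := degEP m
    rw [hm] at h1 ⊢
    omega
  have hkey : Complex.exp ((((2*N : ℕ):ℂ)-1)*I*w) * (QE (2*N)).eval (Complex.exp (-2*I*w))
      = 2 * (∑ k ∈ Finset.Icc 1 N,
          (eulerianNum (2 * N) (N - k) : ℂ) * Complex.cos ((2 * (k : ℂ) - 1) * w)) := by
    rw [Polynomial.eval_eq_sum_range' hdeg, Finset.mul_sum]
    rw [show Finset.range (2*N) = Finset.range (N+N) by rw [two_mul], Finset.sum_range_add]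
    nth_rewrite 1 [← Finset.sum_range_reflect]
    rw [← Finset.sum_add_distrib, Finset.mul_sum]
    rw [show Finset.Icc 1 N = Finset.Ico 1 (N+1) by rw [Finset.Ico_add_one_right_eq_Icc],
      Finset.sum_Ico_eq_sum_range]
    rw [show N+1-1 = N from rfl]
    refine Finset.sum_congr rfl ?_
    intro i hi
    rw [Finset.mem_range] at hi
    have hco : ∀ j, (QE (2*N)).coeff j = (((eulerianPoly (2*N)).coeff j : ℤ) : ℂ) := by
      intro j; simp [QE]
    have hsym : (eulerianPoly (2*N)).coeff (N+i) = (eulerianPoly (2*N)).coeff (N-(1+i)) :=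
      symEP (2*N) (N+i) (N-(1+i)) (by omega)
    have e1 : Complex.exp ((((2*N : ℕ):ℂ)-1)*I*w) * Complex.exp (-2*I*w)^(N-(1+i))
        = Complex.exp ((2*((1+i : ℕ):ℂ)-1)*w*I) := by
      rw [← Complex.exp_nat_mul, ← Complex.exp_add]
      congr 1
      rw [Nat.cast_sub (by omega : 1+i ≤ N)]
      push_cast
      ring
    have e2 : Complex.exp ((((2*N : ℕ):ℂ)-1)*I*w) * Complex.exp (-2*I*w)^(N+i)
        = Complex.exp (-((2*((1+i : ℕ):ℂ)-1)*w)*I) := by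
      rw [← Complex.exp_nat_mul, ← Complex.exp_add]
      congr 1
      push_cast
      ring
    rw [show N-1-i = N-(1+i) by omega, hco, hco, hsym, Complex.cos,
      show eulerianNum (2*N) (N-(1+i)) = (eulerianPoly (2*N)).coeff (N-(1+i)) from rfl]
    linear_combination (((eulerianPoly (2*N)).coeff (N-(1+i)) : ℂ)) * e1
      + (((eulerianPoly (2*N)).coeff (N-(1+i)) : ℂ)) * e2
  rw [hkey]

theorem cot_iteratedDeriv_even (N : ℕ) (hN : 1 ≤ N) (w : ℂ)
    (hw : ∀ k : ℤ, w ≠ (k : ℂ) * Real.pi) :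
    iteratedDeriv (2 * N) Complex.cot w =
      2 * (∑ k ∈ Finset.Icc 1 N,
          (eulerianNum (2 * N) (N - k) : ℂ) * Complex.cos ((2 * (k : ℂ) - 1) * w)) /
        Complex.sin w ^ (2 * N + 1) := by
  have hs : Complex.sin w ≠ 0 := Complex.sin_ne_zero_iff.mpr hw
  obtain ⟨m, hm⟩ : ∃ m, 2*N = m+1 := ⟨2*N-1, by omega⟩
  have h := main_formula m w hs
  rw [← hm] at h
  rw [h, Fc_even N hN w]
end

section
/- For every real number w with 0 < |w| < 1 and every complex s with Re(s) > 1, the identity (1/Γ(s)) ∫₀^∞ t^{s-1} cos(wt)/(e^t - 1) dt = (1/2) ∑_{n≥1} ( (n+iw)^{-s} + (n-iw)^{-s} ) holds, where the complex powers use the principal branch. -/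
/-!
Expand `1 / (e^t - 1) = ∑_{n ≥ 0} e^{-(n+1)t}`. Since `|cos| ≤ 1`, the `n`-th term has
`∫₀^∞ |t^{s-1} cos (w t) e^{-(n+1)t}| dt ≤ Γ(σ) (n+1)^{-σ}` with `σ = Re s > 1`, so the integral
may be taken termwise. Writing `cos (w t) = (e^{i w t} + e^{-i w t}) / 2`, each term is a sum of two
Laplace transforms `∫₀^∞ t^{s-1} e^{-z t} dt = Γ(s) z^{-s}` at `z = n + 1 ± i w`; this formula is
classical for real `z > 0` and extends to `Re z > 0` by the identity theorem.
-/

open Complex Polynomial Filter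

open MeasureTheory Set Topology

lemma integrableOn_rpow_sub_one_mul_exp_neg_mul {a c : ℝ} (ha : 0 < a) (hc : 0 < c) :
    IntegrableOn (fun t : ℝ ↦ t ^ (a - 1) * Real.exp (-(c * t))) (Ioi 0) := by
  simpa [neg_mul] using
    integrableOn_rpow_mul_exp_neg_mul_rpow (s := a - 1) (p := 1) (by linarith) one_pos hc

lemma hasSum_exp_neg_nat_add_one_mul {t : ℝ} (ht : 0 < t) :
    HasSum (fun n : ℕ ↦ Real.exp (-((n + 1) * t))) (1 / (Real.exp t - 1)) := by
  have hq : Real.exp (-t) < 1 := Real.exp_lt_one_iff.2 (neg_lt_zero.2 ht)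
  have hterm : (fun n : ℕ ↦ Real.exp (-((n + 1) * t))) =
      fun n ↦ Real.exp (-t) * Real.exp (-t) ^ n := by
    funext n
    rw [← Real.exp_nat_mul, ← Real.exp_add]
    ring_nf
  have hsum : 1 / (Real.exp t - 1) = Real.exp (-t) * (1 - Real.exp (-t))⁻¹ := by
    have : Real.exp t - 1 ≠ 0 := (sub_pos.2 (Real.one_lt_exp_iff.2 ht)).ne'
    rw [Real.exp_neg]
    field_simp
  rw [hterm, hsum]
  exact (hasSum_geometric_of_lt_one (Real.exp_pos _).le hq).mul_left _

section GammaIntegral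

variable {s : ℂ}

lemma norm_cpow_sub_one_mul_cexp_neg_mul (z : ℂ) {t : ℝ} (ht : 0 < t) :
    ‖(t : ℂ) ^ (s - 1) * cexp (-z * t)‖ = t ^ (s.re - 1) * Real.exp (-(z.re * t)) := by
  simp [norm_cpow_eq_rpow_re_of_pos ht, Complex.norm_exp]

lemma continuousOn_cpow_sub_one_mul_cexp_neg_mul (z : ℂ) :
    ContinuousOn (fun t : ℝ ↦ (t : ℂ) ^ (s - 1) * cexp (-z * t)) (Ioi 0) := by
  refine ContinuousOn.mul (fun t ht ↦ ?_) (by fun_prop)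
  exact ((continuousAt_cpow_const (ofReal_mem_slitPlane.2 ht)).comp
    continuous_ofReal.continuousAt).continuousWithinAt

lemma integrableOn_cpow_sub_one_mul_cexp_neg_mul (hs : 0 < s.re) {z : ℂ} (hz : 0 < z.re) :
    IntegrableOn (fun t : ℝ ↦ (t : ℂ) ^ (s - 1) * cexp (-z * t)) (Ioi 0) := by
  refine (integrableOn_rpow_sub_one_mul_exp_neg_mul hs hz).mono'
    ((continuousOn_cpow_sub_one_mul_cexp_neg_mul z).aestronglyMeasurable measurableSet_Ioi) ?_
  filter_upwards [ae_restrict_mem measurableSet_Ioi] with t ht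
  rw [norm_cpow_sub_one_mul_cexp_neg_mul z ht]

lemma differentiableAt_integral_cpow_sub_one_mul_cexp_neg_mul (hs : 0 < s.re) {z₀ : ℂ}
    (hz₀ : 0 < z₀.re) :
    DifferentiableAt ℂ (fun z : ℂ ↦ ∫ t in Ioi (0 : ℝ), (t : ℂ) ^ (s - 1) * cexp (-z * t)) z₀ := by
  set c : ℝ := z₀.re / 2 with hc_def
  have hc : 0 < c := by positivity
  have hmeas : ∀ z : ℂ, AEStronglyMeasurable (fun t : ℝ ↦ (t : ℂ) ^ (s - 1) * cexp (-z * t))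
      (volume.restrict (Ioi 0)) := fun z ↦
    (continuousOn_cpow_sub_one_mul_cexp_neg_mul z).aestronglyMeasurable measurableSet_Ioi
  refine (hasDerivAt_integral_of_dominated_loc_of_deriv_le (Metric.ball_mem_nhds z₀ hc)
    (Eventually.of_forall hmeas) (integrableOn_cpow_sub_one_mul_cexp_neg_mul hs hz₀)
    ((continuous_ofReal.neg.aestronglyMeasurable.restrict).mul (hmeas z₀))
    (F' := fun z t ↦ -(t : ℂ) * ((t : ℂ) ^ (s - 1) * cexp (-z * t)))
    (bound := fun t ↦ t ^ (s.re + 1 - 1) * Real.exp (-(c * t))) ?_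
    (integrableOn_rpow_sub_one_mul_exp_neg_mul (by positivity) hc) ?_).2.differentiableAt
  · filter_upwards [ae_restrict_mem measurableSet_Ioi] with t (ht : 0 < t) z hz
    have hcz : c ≤ z.re := by
      have := (abs_re_le_norm (z - z₀)).trans (le_of_lt (by simpa [dist_eq] using hz))
      rw [sub_re, abs_le] at this
      linarith [this.1]
    rw [norm_mul, norm_cpow_sub_one_mul_cexp_neg_mul z ht, norm_neg, norm_real,
      Real.norm_of_nonneg ht.le, add_sub_right_comm, Real.rpow_add_one ht.ne', mul_left_comm,
      ← mul_assoc]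
    gcongr
  · filter_upwards [ae_restrict_mem measurableSet_Ioi] with t ht z hz
    have h : HasDerivAt (fun z : ℂ ↦ -z * t) (-(t : ℂ)) z := by
      simpa using (hasDerivAt_id z).neg.mul_const (t : ℂ)
    exact (h.cexp.const_mul _).congr_deriv (by ring)

theorem integral_cpow_sub_one_mul_cexp_neg_mul (hs : 0 < s.re) {z : ℂ} (hz : 0 < z.re) :
    ∫ t in Ioi (0 : ℝ), (t : ℂ) ^ (s - 1) * cexp (-z * t) = Gamma s * z ^ (-s) := by
  set U : Set ℂ := {z | 0 < z.re}
  have hU : IsOpen U := isOpen_lt continuous_const continuous_re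
  have hf : AnalyticOnNhd ℂ (fun z : ℂ ↦ ∫ t in Ioi (0 : ℝ), (t : ℂ) ^ (s - 1) * cexp (-z * t))
      U := DifferentiableOn.analyticOnNhd (fun z hz ↦
    (differentiableAt_integral_cpow_sub_one_mul_cexp_neg_mul hs hz).differentiableWithinAt) hU
  have hg : AnalyticOnNhd ℂ (fun z : ℂ ↦ Gamma s * z ^ (-s)) U :=
    DifferentiableOn.analyticOnNhd (fun z hz ↦
      ((differentiableAt_id.cpow_const (Or.inl hz)).const_mul _).differentiableWithinAt) hU
  have hreal : ∀ x : ℝ, 0 < x →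
      ∫ t in Ioi (0 : ℝ), (t : ℂ) ^ (s - 1) * cexp (-(x : ℂ) * t) = Gamma s * (x : ℂ) ^ (-s) := by
    intro x hx
    simp_rw [neg_mul, integral_cpow_mul_exp_neg_mul_Ioi hs hx, one_div,
      inv_cpow _ _ (by rw [arg_ofReal_of_nonneg hx.le]; exact Real.pi_ne_zero.symm),
      ← cpow_neg, mul_comm]
  have hofReal : Tendsto (fun x : ℝ ↦ (x : ℂ)) (𝓝[≠] 1) (𝓝[≠] 1) :=
    continuous_ofReal.continuousWithinAt.tendsto_nhdsWithin fun x hx ↦ by simpa using hx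
  refine hf.eqOn_of_preconnected_of_frequently_eq hg (convex_halfSpace_re_gt 0).isPreconnected
    (by simp [U]) (hofReal.frequently (Eventually.frequently ?_)) hz
  filter_upwards [eventually_nhdsWithin_of_eventually_nhds (eventually_gt_nhds one_pos)]
    with x hx using hreal x hx

end GammaIntegral

section CosIntegral

variable {s : ℂ}

lemma cpow_sub_one_mul_cos_mul_exp_neg_mul_eq (w a : ℝ) :
    (fun t : ℝ ↦ (t : ℂ) ^ (s - 1) * ((Real.cos (w * t) * Real.exp (-(a * t)) : ℝ) : ℂ)) =
      fun t : ℝ ↦ ((t : ℂ) ^ (s - 1) * cexp (-(a + I * w) * t)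
        + (t : ℂ) ^ (s - 1) * cexp (-(a - I * w) * t)) / 2 := by
  funext t
  push_cast
  rw [show -(a + I * w) * t = -(w * t : ℂ) * I + -(a * t : ℂ) by ring,
    show -(a - I * w) * t = (w * t : ℂ) * I + -(a * t : ℂ) by ring, exp_add, exp_add, cos]
  ring

lemma integrableOn_cpow_sub_one_mul_cos_mul_exp_neg_mul (hs : 0 < s.re) (w : ℝ) {a : ℝ}
    (ha : 0 < a) :
    IntegrableOn
      (fun t : ℝ ↦ (t : ℂ) ^ (s - 1) * ((Real.cos (w * t) * Real.exp (-(a * t)) : ℝ) : ℂ))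
      (Ioi 0) := by
  rw [cpow_sub_one_mul_cos_mul_exp_neg_mul_eq]
  exact ((integrableOn_cpow_sub_one_mul_cexp_neg_mul hs (by simpa using ha)).add
    (integrableOn_cpow_sub_one_mul_cexp_neg_mul hs (by simpa using ha))).div_const 2

lemma integral_cpow_sub_one_mul_cos_mul_exp_neg_mul (hs : 0 < s.re) (w : ℝ) {a : ℝ}
    (ha : 0 < a) :
    ∫ t in Ioi (0 : ℝ), (t : ℂ) ^ (s - 1) * ((Real.cos (w * t) * Real.exp (-(a * t)) : ℝ) : ℂ) =
      Gamma s / 2 * ((a + I * w) ^ (-s) + (a - I * w) ^ (-s)) := by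
  have h₁ : 0 < (a + I * w : ℂ).re := by simpa using ha
  have h₂ : 0 < (a - I * w : ℂ).re := by simpa using ha
  rw [cpow_sub_one_mul_cos_mul_exp_neg_mul_eq, integral_div,
    integral_add (integrableOn_cpow_sub_one_mul_cexp_neg_mul hs h₁)
      (integrableOn_cpow_sub_one_mul_cexp_neg_mul hs h₂),
    integral_cpow_sub_one_mul_cexp_neg_mul hs h₁, integral_cpow_sub_one_mul_cexp_neg_mul hs h₂]
  ring

lemma integral_norm_cpow_sub_one_mul_cos_mul_exp_neg_mul_le (hs : 0 < s.re) (w : ℝ) {a : ℝ}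
    (ha : 0 < a) :
    ∫ t in Ioi (0 : ℝ), ‖(t : ℂ) ^ (s - 1) * ((Real.cos (w * t) * Real.exp (-(a * t)) : ℝ) : ℂ)‖
      ≤ (1 / a) ^ s.re * Real.Gamma s.re := by
  rw [← Real.integral_rpow_mul_exp_neg_mul_Ioi hs ha]
  refine setIntegral_mono_on (integrableOn_cpow_sub_one_mul_cos_mul_exp_neg_mul hs w ha).norm
    (integrableOn_rpow_sub_one_mul_exp_neg_mul hs ha) measurableSet_Ioi fun t ht ↦ ?_
  rw [norm_mul, norm_cpow_eq_rpow_re_of_pos ht, norm_real, Real.norm_eq_abs, abs_mul,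
    Real.abs_exp, sub_re, one_re]
  exact mul_le_mul_of_nonneg_left
    (mul_le_of_le_one_left (Real.exp_pos _).le (Real.abs_cos_le_one _))
    (Real.rpow_pos_of_pos ht _).le

theorem hasSum_integral_cpow_sub_one_mul_cos_div_exp_sub_one (hs : 1 < s.re) (w : ℝ) :
    HasSum (fun n : ℕ ↦ Gamma s / 2 * ((n + 1 + I * w) ^ (-s) + (n + 1 - I * w) ^ (-s)))
      (∫ t in Ioi (0 : ℝ), (t : ℂ) ^ (s - 1) * Real.cos (w * t) / (Real.exp t - 1)) := by
  have hs₀ : 0 < s.re := by linarith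
  have hpos (n : ℕ) : (0 : ℝ) < n + 1 := n.cast_add_one_pos
  have hsummable : Summable fun n : ℕ ↦ (1 / ((n : ℝ) + 1)) ^ s.re * Real.Gamma s.re := by
    refine (((Real.summable_one_div_nat_add_rpow 1 s.re).2 hs).mul_right
      (Real.Gamma s.re)).congr fun n ↦ ?_
    rw [abs_of_pos (hpos n), Real.div_rpow zero_le_one (hpos n).le, Real.one_rpow]
  have hpoint : ∀ t ∈ Ioi (0 : ℝ),
      (t : ℂ) ^ (s - 1) * Real.cos (w * t) / (Real.exp t - 1) =
        ∑' n : ℕ, (t : ℂ) ^ (s - 1) * ((Real.cos (w * t) * Real.exp (-((n + 1) * t)) : ℝ) : ℂ) :=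
    fun t ht ↦ by
      rw [((hasSum_ofReal.2 ((hasSum_exp_neg_nat_add_one_mul ht).mul_left
        (Real.cos (w * t)))).mul_left ((t : ℂ) ^ (s - 1))).tsum_eq]
      push_cast
      ring
  have htermwise := hasSum_integral_of_summable_integral_norm
    (fun n ↦ integrableOn_cpow_sub_one_mul_cos_mul_exp_neg_mul hs₀ w (hpos n))
    (Summable.of_nonneg_of_le (fun n ↦ integral_nonneg fun _ ↦ norm_nonneg _)
      (fun n ↦ integral_norm_cpow_sub_one_mul_cos_mul_exp_neg_mul_le hs₀ w (hpos n)) hsummable)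
  rw [setIntegral_congr_fun measurableSet_Ioi hpoint]
  refine htermwise.congr_fun fun n ↦ ?_
  rw [integral_cpow_sub_one_mul_cos_mul_exp_neg_mul hs₀ w (hpos n)]
  push_cast
  rfl

end CosIntegral

theorem LC_cos_integral_eq_series_general (w : ℝ)
    (s : ℂ) (hs : 1 < s.re) :
    (1 / Complex.Gamma s) *
        ∫ t in Set.Ioi (0 : ℝ), (t : ℂ) ^ (s - 1) * Real.cos (w * t) / (Real.exp t - 1) =
      (1 / 2 : ℂ) *
        ∑' n : ℕ,
          (((n : ℂ) + 1 + Complex.I * w) ^ (-s) + ((n : ℂ) + 1 - Complex.I * w) ^ (-s)) := by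
  have hΓ : Gamma s ≠ 0 := Gamma_ne_zero_of_re_pos (by linarith)
  rw [← (hasSum_integral_cpow_sub_one_mul_cos_div_exp_sub_one hs w).tsum_eq, tsum_mul_left]
  field_simp

theorem LC_cos_integral_eq_series (w : ℝ) (hw0 : 0 < |w|) (hw1 : |w| < 1)
    (s : ℂ) (hs : 1 < s.re) :
    (1 / Complex.Gamma s) *
        ∫ t in Set.Ioi (0 : ℝ), (t : ℂ) ^ (s - 1) * Real.cos (w * t) / (Real.exp t - 1) =
      (1 / 2 : ℂ) *
        ∑' n : ℕ,
          (((n : ℂ) + 1 + Complex.I * w) ^ (-s) + ((n : ℂ) + 1 - Complex.I * w) ^ (-s)) :=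
  LC_cos_integral_eq_series_general w s hs
end

section
/- For every real number w with 0 < |w| < 1 and every complex s with Re(s) > 1, the identity -(1/Γ(s)) ∫₀^∞ t^{s-1} sinh(wt)/(e^t - 1) dt = (1/2) ∑_{n≥1} ( (n+w)^{-s} - (n-w)^{-s} ) holds. -/
open Complex Polynomial Filter

set_option maxHeartbeats 1000000 in
theorem LC_sinh_integral_eq_series (w : ℝ) (hw0 : 0 < |w|) (hw1 : |w| < 1)
    (s : ℂ) (hs : 1 < s.re) :
    -((1 / Complex.Gamma s) *
        ∫ t in Set.Ioi (0 : ℝ), (t : ℂ) ^ (s - 1) * Real.sinh (w * t) / (Real.exp t - 1)) =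
      (1 / 2 : ℂ) *
        ∑' n : ℕ, (((n : ℂ) + 1 + w) ^ (-s) - ((n : ℂ) + 1 - w) ^ (-s)) := by
  obtain ⟨hwl, hwr⟩ := abs_lt.mp hw1
  set F : ℝ → ℂ := fun t ↦ (Real.sinh (w * t) : ℂ) / ((Real.exp t : ℂ) - 1) with hF_def
  set a : ℕ × Bool → ℂ := fun i ↦ if i.2 then (1/2 : ℂ) else -(1/2 : ℂ) with ha_def
  set p : ℕ × Bool → ℝ := fun i ↦ (i.1 : ℝ) + 1 - (if i.2 then w else -w) with hp_def
  have hp_pos : ∀ i, 0 < p i := by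
    rintro ⟨n, b⟩
    have hn : (0:ℝ) ≤ (n:ℝ) := Nat.cast_nonneg n
    cases b <;> simp only [hp_def] <;> simp <;> nlinarith
  have hs0 : 0 < s.re := by linarith
  -- pointwise expansion as a sum of exponentials
  have hF : ∀ t ∈ Set.Ioi (0:ℝ), HasSum (fun i ↦ a i * Real.exp (-p i * t)) (F t) := by
    intro t ht
    rw [Set.mem_Ioi] at ht
    set r : ℂ := (Real.exp (-t) : ℂ) with hr_def
    have hrnorm : ‖r‖ < 1 := by
      rw [hr_def, Complex.norm_real, Real.norm_eq_abs, abs_of_pos (Real.exp_pos _)]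
      exact Real.exp_lt_one_iff.mpr (by linarith)
    set g : ℕ → ℂ := fun n ↦ r ^ (n + 1) with hg_def
    set h : Bool → ℂ := fun b ↦ (if b then (1/2 : ℂ) else -(1/2 : ℂ)) *
      (Real.exp ((if b then w else -w) * t) : ℂ) with hh_def
    have hG : HasSum g (r * (1 - r)⁻¹) := by
      have h0 := (hasSum_geometric_of_norm_lt_one hrnorm).mul_left r
      refine HasSum.congr_fun h0 fun n ↦ ?_
      show r ^ (n + 1) = r * r ^ n
      rw [pow_succ, mul_comm]
    have hH : HasSum h (∑ b, h b) := hasSum_fintype h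
    have hgn : Summable fun n ↦ ‖g n‖ := by
      have h1 : Summable fun n : ℕ ↦ ‖r‖ * ‖r‖ ^ n :=
        (summable_geometric_of_lt_one (norm_nonneg _) hrnorm).mul_left _
      refine h1.congr fun n ↦ ?_
      show ‖r‖ * ‖r‖ ^ n = ‖r ^ (n + 1)‖
      rw [norm_pow, pow_succ, mul_comm]
    have hhn : Summable fun b ↦ ‖h b‖ := Summable.of_finite
    have hfsum : Summable fun z : ℕ × Bool ↦ g z.1 * h z.2 :=
      summable_mul_of_summable_norm hgn hhn
    have htsum : (∑' z : ℕ × Bool, g z.1 * h z.2) = (r * (1 - r)⁻¹) * (∑ b, h b) := by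
      rw [← tsum_mul_tsum_of_summable_norm hgn hhn, hG.tsum_eq, hH.tsum_eq]
    have hprod : HasSum (fun z : ℕ × Bool ↦ g z.1 * h z.2) ((r * (1 - r)⁻¹) * (∑ b, h b)) := by
      rw [← htsum]; exact hfsum.hasSum
    have hfun : (fun i : ℕ × Bool ↦ a i * (Real.exp (-p i * t) : ℂ)) =
        fun z : ℕ × Bool ↦ g z.1 * h z.2 := by
      funext z
      obtain ⟨n, b⟩ := z
      have hexp : Real.exp (-p (n, b) * t) =
          Real.exp (-t) ^ (n + 1) * Real.exp ((if b then w else -w) * t) := by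
        rw [← Real.exp_nat_mul, ← Real.exp_add]
        congr 1
        cases b <;> simp only [hp_def] <;> push_cast <;> ring
      rw [hexp]
      cases b <;>
        simp [ha_def, hg_def, hh_def, hr_def, Complex.ofReal_mul, Complex.ofReal_pow] <;>
        ring
    have hE1 : (1:ℝ) < Real.exp t := by
      have := Real.add_one_le_exp t; nlinarith [Real.exp_pos t]
    have hE0 : (Real.exp t : ℂ) ≠ 0 := by
      exact_mod_cast (Real.exp_pos t).ne'
    have hEne : (Real.exp t : ℂ) - 1 ≠ 0 := by
      rw [sub_ne_zero]
      exact_mod_cast hE1.ne'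
    have hr_inv : r = ((Real.exp t : ℂ))⁻¹ := by
      rw [hr_def, Real.exp_neg]; push_cast; ring
    have h1r : (1 : ℂ) - r ≠ 0 := by
      intro hcon
      rw [sub_eq_zero] at hcon
      rw [← hcon] at hrnorm
      norm_num at hrnorm
    have htrue : h true = (1/2 : ℂ) * (Real.exp (w * t) : ℂ) := by
      simp [hh_def]
    have hfalse : h false = -(1/2 : ℂ) * (Real.exp (-(w * t)) : ℂ) := by
      simp [hh_def, neg_mul]
    have h1r' : (1 : ℂ) - ((Real.exp t : ℂ))⁻¹ ≠ 0 := by rw [← hr_inv]; exact h1r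
    have hval : (r * (1 - r)⁻¹) * (∑ b, h b) = F t := by
      rw [Fintype.sum_bool, htrue, hfalse, hr_inv]
      show _ = (Real.sinh (w * t) : ℂ) / ((Real.exp t : ℂ) - 1)
      rw [Real.sinh_eq]
      push_cast
      field_simp
      ring
    rw [hfun, ← hval]
    exact hprod
  -- summability of the norms
  have hsum : Summable fun i : ℕ × Bool ↦ ‖a i‖ / p i ^ s.re := by
    have hw1' : (0:ℝ) < 1 - |w| := by linarith
    set c : ℝ := (1/2) * ((1 - |w|) ^ s.re)⁻¹ with hc_def
    have base : Summable (fun n : ℕ ↦ ((((n:ℝ) + 1)) ^ s.re)⁻¹) := by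
      have h1 : Summable (fun n : ℕ ↦ 1 / (n:ℝ) ^ s.re) :=
        Real.summable_one_div_nat_rpow.mpr hs
      have h2 := h1.comp_injective Nat.succ_injective
      refine h2.congr fun n ↦ ?_
      simp [Function.comp, one_div]
    have hmaj : Summable fun i : ℕ × Bool ↦ (c * (((i.1:ℝ) + 1) ^ s.re)⁻¹) * 1 := by
      have hB : Summable (fun _ : Bool ↦ (1:ℝ)) := Summable.of_finite
      exact (base.mul_left c).mul_of_nonneg hB
        (fun n ↦ by positivity) (fun b ↦ zero_le_one)
    have hmaj2 : Summable fun i : ℕ × Bool ↦ c * (((i.1:ℝ) + 1) ^ s.re)⁻¹ :=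
      hmaj.congr (fun i ↦ mul_one _)
    refine Summable.of_nonneg_of_le
      (fun i ↦ div_nonneg (norm_nonneg _) (Real.rpow_nonneg (hp_pos i).le _))
      (fun i ↦ ?_) hmaj2
    -- bound: ‖a i‖ / p i ^ σ ≤ c * ((i.1+1)^σ)⁻¹
    obtain ⟨n, b⟩ := i
    have hna : ‖a (n, b)‖ = 1/2 := by cases b <;> simp [ha_def]
    rw [hna]
    have hlb : (1 - |w|) * ((n:ℝ) + 1) ≤ p (n, b) := by
      have hn : (0:ℝ) ≤ (n:ℝ) := Nat.cast_nonneg n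
      have haw : |w| < 1 := hw1
      have h1 : -|w| ≤ w := neg_abs_le w
      have h2 : w ≤ |w| := le_abs_self w
      cases b
      · rw [show p (n, false) = (n:ℝ) + 1 + w from by simp [hp_def]]; nlinarith
      · rw [show p (n, true) = (n:ℝ) + 1 - w from by simp [hp_def]]; nlinarith
    have hlb0 : (0:ℝ) < (1 - |w|) * ((n:ℝ) + 1) := by positivity
    have hrp : ((1 - |w|) * ((n:ℝ) + 1)) ^ s.re ≤ p (n, b) ^ s.re :=
      Real.rpow_le_rpow hlb0.le hlb (le_of_lt hs0)
    have hrp0 : (0:ℝ) < ((1 - |w|) * ((n:ℝ) + 1)) ^ s.re := Real.rpow_pos_of_pos hlb0 _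
    have key : (1/2 : ℝ) / p (n, b) ^ s.re ≤ (1/2) / ((1 - |w|) * ((n:ℝ) + 1)) ^ s.re := by
      apply div_le_div_of_nonneg_left (by norm_num) hrp0 hrp
    refine key.trans (le_of_eq ?_)
    rw [Real.mul_rpow hw1'.le (by positivity), hc_def]
    field_simp
  -- the Mellin transform identity
  have hp' : ∀ i, a i = 0 ∨ 0 < p i := fun i ↦ Or.inr (hp_pos i)
  have key := hasSum_mellin hp' hs0 hF hsum
  have key2 : HasSum (fun n : ℕ ↦ ∑ b : Bool, (Complex.Gamma s * a (n, b) / (p (n, b) : ℂ) ^ s))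
      (mellin F s) := key.prod_fiberwise (fun n ↦ hasSum_fintype _)
  have hΓ : Complex.Gamma s ≠ 0 := Complex.Gamma_ne_zero_of_re_pos hs0
  have key3 := key2.mul_left (-(1 / Complex.Gamma s))
  have heq : (fun n : ℕ ↦ -(1 / Complex.Gamma s) *
        ∑ b : Bool, (Complex.Gamma s * a (n, b) / (p (n, b) : ℂ) ^ s)) =
      fun n : ℕ ↦ (1/2 : ℂ) * (((n : ℂ) + 1 + w) ^ (-s) - ((n : ℂ) + 1 - w) ^ (-s)) := by
    funext n
    rw [Fintype.sum_bool]
    have ha1 : a (n, true) = 1/2 := by simp [ha_def]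
    have ha2 : a (n, false) = -(1/2) := by simp [ha_def]
    have hq1 : p (n, true) = (n:ℝ) + 1 - w := by simp [hp_def]
    have hq2 : p (n, false) = (n:ℝ) + 1 + w := by simp [hp_def]
    rw [ha1, ha2, hq1, hq2]
    have c1 : (((n:ℝ) + 1 - w : ℝ) : ℂ) = (n:ℂ) + 1 - w := by push_cast; ring
    have c2 : (((n:ℝ) + 1 + w : ℝ) : ℂ) = (n:ℂ) + 1 + w := by push_cast; ring
    rw [c1, c2, cpow_neg, cpow_neg]
    have hb1 : ((n:ℂ) + 1 - w) ≠ 0 := by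
      rw [← c1]
      exact_mod_cast (show ((n:ℝ) + 1 - w) ≠ 0 by nlinarith [Nat.cast_nonneg (α := ℝ) n])
    have hb2 : ((n:ℂ) + 1 + w) ≠ 0 := by
      rw [← c2]
      exact_mod_cast (show ((n:ℝ) + 1 + w) ≠ 0 by nlinarith [Nat.cast_nonneg (α := ℝ) n])
    have hX : ((n:ℂ) + 1 - w) ^ s ≠ 0 := by
      rw [Ne, cpow_eq_zero_iff, not_and_or]
      exact Or.inl hb1
    have hY : ((n:ℂ) + 1 + w) ^ s ≠ 0 := by
      rw [Ne, cpow_eq_zero_iff, not_and_or]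
      exact Or.inl hb2
    field_simp
    ring
  rw [heq] at key3
  have hmellin : (∫ t in Set.Ioi (0 : ℝ),
      (t : ℂ) ^ (s - 1) * Real.sinh (w * t) / (Real.exp t - 1)) = mellin F s := by
    simp only [mellin, smul_eq_mul, hF_def, mul_div_assoc]
  rw [hmellin, neg_mul_eq_neg_mul, key3.tsum_eq.symm]
  exact tsum_mul_left
end

section
/- For every complex number w with w ∉ ℤ, Euler's partial fraction expansion holds: π cot(πw) = 1/w + ∑_{n≥1} ( 1/(w+n) + 1/(w-n) ), where the series converges (the n-th term equals 2w/(w²-n²)). -/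
open Complex Polynomial Filter

theorem euler_cot_partial_fraction (w : ℂ) (hw : ∀ n : ℤ, w ≠ (n : ℂ)) :
    (Real.pi : ℂ) * Complex.cot (Real.pi * w) =
      1 / w + ∑' n : ℕ, (1 / (w + ((n : ℂ) + 1)) + 1 / (w - ((n : ℂ) + 1))) := by
  have hw' : w ∈ integerComplement := fun ⟨n, hn⟩ => hw n hn.symm
  simp_rw [add_comm (1 / (w + _)), ← cot_series_rep' hw']
  ring
end
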